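/- Let λ(x) = √(x² + m²) for x ≥ 0 and fix k > 0. Then lim_{δ→0⁺} ∫₀^∞ 2δ/(δ² + (λ(x) - λ(k))²) dx = 2π√(k²+m²)/k. -/

import Mathlib

/-!
Substituting `y = √(x² + m²)` turns the integral into `∫_{y > m} φ y · 2δ / (δ² + (y - c)²) dy`
with `c = √(k² + m²)` and Jacobian `φ y = y / √(y² - m²)`. The kernel `2δ / (δ² + t²)` is `2π`
times the Poisson kernel of the half-plane, so the integral tends to `2π φ c = 2π c / k`: near the
integrable singularity of `φ` at `m` the kernel is `O(δ)`, while beyond it `φ` is bounded and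
continuous at `c`, and dominated convergence applies after rescaling `y = c + δ t`.
-/

open Real Filter MeasureTheory Set Topology

theorem integrable_poisson {δ : ℝ} (hδ : 0 < δ) (c : ℝ) :
    Integrable fun y => 2 * δ / (δ ^ 2 + (y - c) ^ 2) := by
  refine (((integrable_inv_one_add_sq.comp_div hδ.ne').comp_sub_right c).const_mul
    (2 / δ)).congr (Eventually.of_forall fun y => ?_)
  have : 0 < δ ^ 2 + (y - c) ^ 2 := by positivity
  field_simp

theorem poisson_le_two_div {δ : ℝ} (hδ : 0 < δ) (t : ℝ) : 2 * δ / (δ ^ 2 + t ^ 2) ≤ 2 / δ := by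
  rw [div_le_div_iff₀ (by positivity) hδ]
  nlinarith [sq_nonneg t]

theorem integral_mul_poisson_eq_integral_comp_affine (f : ℝ → ℝ) (c : ℝ) {δ : ℝ} (hδ : 0 < δ) :
    ∫ y, f y * (2 * δ / (δ ^ 2 + (y - c) ^ 2)) = ∫ t, f (c + δ * t) * (2 / (1 + t ^ 2)) := by
  have hsub : ∫ t, f (c + δ * t) * (2 * δ / (δ ^ 2 + (c + δ * t - c) ^ 2))
      = δ⁻¹ * ∫ y, f y * (2 * δ / (δ ^ 2 + (y - c) ^ 2)) := by
    rw [Measure.integral_comp_mul_left (fun s => f (c + s) * (2 * δ / (δ ^ 2 + (c + s - c) ^ 2))),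
      integral_add_left_eq_self (fun y => f y * (2 * δ / (δ ^ 2 + (y - c) ^ 2))),
      abs_of_pos (inv_pos.2 hδ), smul_eq_mul]
  have hpoint : ∀ t : ℝ, f (c + δ * t) * (2 * δ / (δ ^ 2 + (c + δ * t - c) ^ 2))
      = δ⁻¹ * (f (c + δ * t) * (2 / (1 + t ^ 2))) := fun t => by
    field_simp
    ring
  simp only [hpoint, integral_const_mul] at hsub
  exact (mul_left_cancel₀ (inv_ne_zero hδ.ne') hsub).symm

theorem tendsto_integral_mul_poisson_of_bounded {f : ℝ → ℝ} {c C : ℝ}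
    (hf : Measurable f) (hbdd : ∀ y, ‖f y‖ ≤ C) (hc : ContinuousAt f c) :
    Tendsto (fun δ => ∫ y, f y * (2 * δ / (δ ^ 2 + (y - c) ^ 2))) (𝓝[>] 0)
      (𝓝 (2 * π * f c)) := by
  have hlim : ∫ t, f c * (2 / (1 + t ^ 2)) = 2 * π * f c := by
    simp only [div_eq_mul_inv, integral_const_mul, integral_univ_inv_one_add_sq]
    ring
  rw [← hlim]
  refine Tendsto.congr' (eventually_nhdsWithin_of_forall fun δ hδ =>
    (integral_mul_poisson_eq_integral_comp_affine f c hδ).symm) ?_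
  refine tendsto_integral_filter_of_dominated_convergence (fun t => C * (2 / (1 + t ^ 2)))
    (Eventually.of_forall fun δ => ?_) (Eventually.of_forall fun δ => ?_) ?_ ?_
  · exact ((hf.comp (by fun_prop)).mul (by fun_prop)).aestronglyMeasurable
  · refine Eventually.of_forall fun t => ?_
    rw [norm_mul, Real.norm_of_nonneg (by positivity : (0 : ℝ) ≤ 2 / (1 + t ^ 2))]
    exact mul_le_mul_of_nonneg_right (hbdd _) (by positivity)
  · simpa only [div_eq_mul_inv, mul_assoc] using
      (integrable_inv_one_add_sq.const_mul 2).const_mul C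
  · refine Eventually.of_forall fun t => Tendsto.mul_const _ ?_
    have haffine : Tendsto (fun δ : ℝ => c + δ * t) (𝓝 0) (𝓝 c) := by
      simpa using ((continuous_mul_const t).const_add c).tendsto 0
    exact hc.tendsto.comp (tendsto_nhdsWithin_of_tendsto_nhds haffine)

theorem tendsto_setIntegral_mul_poisson_of_subset_Iic {f : ℝ → ℝ} {s : Set ℝ} {p c : ℝ}
    (hf : IntegrableOn f s) (hs : MeasurableSet s) (hsp : s ⊆ Iic p) (hpc : p < c) :
    Tendsto (fun δ => ∫ y in s, f y * (2 * δ / (δ ^ 2 + (y - c) ^ 2))) (𝓝[>] 0) (𝓝 0) := by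
  have hbound : Tendsto (fun δ => (∫ y in s, ‖f y‖) * (2 * δ / (c - p) ^ 2)) (𝓝[>] 0) (𝓝 0) :=
    tendsto_nhdsWithin_of_tendsto_nhds <| (by fun_prop : Continuous fun δ : ℝ =>
      (∫ y in s, ‖f y‖) * (2 * δ / (c - p) ^ 2)).tendsto' 0 0 (by simp)
  refine squeeze_zero_norm' ?_ hbound
  filter_upwards [self_mem_nhdsWithin] with δ (hδ : 0 < δ)
  rw [← integral_mul_const]
  refine norm_integral_le_of_norm_le (hf.norm.mul_const _) ((ae_restrict_iff' hs).2 ?_)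
  refine Eventually.of_forall fun y hy => ?_
  rw [norm_mul, Real.norm_of_nonneg (r := 2 * δ / (δ ^ 2 + (y - c) ^ 2)) (by positivity)]
  refine mul_le_mul_of_nonneg_left ?_ (norm_nonneg _)
  have hy' : c - p ≤ c - y := by linarith [mem_Iic.1 (hsp hy)]
  rw [div_le_div_iff_of_pos_left (by positivity) (by nlinarith) (by positivity)]
  nlinarith

theorem tendsto_setIntegral_Ioi_mul_poisson {φ : ℝ → ℝ} {m p c C : ℝ} (hmp : m ≤ p) (hpc : p < c)
    (hφ : Measurable φ) (hnear : IntegrableOn φ (Ioc m p)) (hfar : ∀ y ∈ Ioi p, ‖φ y‖ ≤ C)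
    (hc : ContinuousAt φ c) :
    Tendsto (fun δ => ∫ y in Ioi m, φ y * (2 * δ / (δ ^ 2 + (y - c) ^ 2)))
      (𝓝[>] 0) (𝓝 (2 * π * φ c)) := by
  have hnear_lim := tendsto_setIntegral_mul_poisson_of_subset_Iic hnear measurableSet_Ioc
    Ioc_subset_Iic_self hpc
  have hfar_lim : Tendsto (fun δ => ∫ y in Ioi p, φ y * (2 * δ / (δ ^ 2 + (y - c) ^ 2)))
      (𝓝[>] 0) (𝓝 (2 * π * φ c)) := by
    have hC : 0 ≤ C := (norm_nonneg _).trans (hfar c hpc)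
    have hlim := tendsto_integral_mul_poisson_of_bounded (c := c)
      (hφ.indicator (measurableSet_Ioi (a := p)))
      (fun y => by
        by_cases hy : y ∈ Ioi p
        · simpa only [indicator_of_mem hy] using hfar y hy
        · simpa only [indicator_of_notMem hy, norm_zero] using hC)
      (hc.congr (by
        filter_upwards [Ioi_mem_nhds hpc] with y hy
        rw [indicator_of_mem hy]))
    rw [indicator_of_mem (show c ∈ Ioi p from hpc)] at hlim
    refine hlim.congr fun δ => ?_
    rw [← integral_indicator measurableSet_Ioi]
    simp_rw [indicator_mul_left]
  refine zero_add (2 * π * φ c) ▸ (hnear_lim.add hfar_lim).congr'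
    (eventually_nhdsWithin_of_forall fun δ (hδ : 0 < δ) => ?_)
  have hK_meas : AEStronglyMeasurable (fun y => 2 * δ / (δ ^ 2 + (y - c) ^ 2)) :=
    (by fun_prop : Measurable fun y => 2 * δ / (δ ^ 2 + (y - c) ^ 2)).aestronglyMeasurable
  dsimp only
  rw [← Ioc_union_Ioi_eq_Ioi hmp, setIntegral_union (Ioc_disjoint_Ioi le_rfl) measurableSet_Ioi]
  · exact hnear.mul_bdd hK_meas.restrict (Eventually.of_forall fun y => by
      rw [Real.norm_of_nonneg (by positivity)]
      exact poisson_le_two_div hδ _)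
  · exact (integrable_poisson hδ c).integrableOn.bdd_mul hφ.aestronglyMeasurable
      ((ae_restrict_iff' measurableSet_Ioi).2 (Eventually.of_forall hfar))

theorem hasDerivAt_sqrt_sq_sub_sq {m y : ℝ} (h : m ^ 2 < y ^ 2) :
    HasDerivAt (fun y => √(y ^ 2 - m ^ 2)) (y / √(y ^ 2 - m ^ 2)) y := by
  have hd := ((hasDerivAt_pow 2 y).sub_const (m ^ 2)).sqrt (sub_pos.2 h).ne'
  convert hd using 1
  field_simp
  ring

section

variable {m : ℝ}

theorem antitoneOn_div_sqrt_sq_sub_sq (hm : 0 ≤ m) :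
    AntitoneOn (fun y => y / √(y ^ 2 - m ^ 2)) (Ioi m) := by
  intro a (ha : m < a) b (hb : m < b) hab
  have ha' := sub_pos.2 (pow_lt_pow_left₀ ha hm two_ne_zero)
  have hb' := sub_pos.2 (pow_lt_pow_left₀ hb hm two_ne_zero)
  have hsqrt_mul (u v : ℝ) (hu : 0 ≤ u) : u * √v = √(u ^ 2 * v) := by
    rw [sqrt_mul (sq_nonneg u), sqrt_sq hu]
  show b / √(b ^ 2 - m ^ 2) ≤ a / √(a ^ 2 - m ^ 2)
  rw [div_le_div_iff₀ (sqrt_pos.2 hb') (sqrt_pos.2 ha'), hsqrt_mul b _ (hm.trans hb.le),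
    hsqrt_mul a _ (hm.trans ha.le)]
  refine sqrt_le_sqrt ?_
  have hab2 : a ^ 2 ≤ b ^ 2 := pow_le_pow_left₀ (hm.trans ha.le) hab 2
  nlinarith [mul_le_mul_of_nonneg_right hab2 (sq_nonneg m)]

theorem norm_div_sqrt_sq_sub_sq_le (hm : 0 ≤ m) {p y : ℝ} (hmp : m < p) (hpy : p ≤ y) :
    ‖y / √(y ^ 2 - m ^ 2)‖ ≤ p / √(p ^ 2 - m ^ 2) := by
  rw [Real.norm_of_nonneg (div_nonneg (hm.trans (hmp.trans_le hpy).le) (sqrt_nonneg _))]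
  exact antitoneOn_div_sqrt_sq_sub_sq hm hmp (hmp.trans_le hpy) hpy

theorem integrableOn_div_sqrt_sq_sub_sq (hm : 0 ≤ m) (p : ℝ) :
    IntegrableOn (fun y => y / √(y ^ 2 - m ^ 2)) (Ioc m p) :=
  intervalIntegral.integrableOn_deriv_of_nonneg (g := fun y => √(y ^ 2 - m ^ 2))
    (by fun_prop)
    (fun y hy => hasDerivAt_sqrt_sq_sub_sq (pow_lt_pow_left₀ hy.1 hm two_ne_zero))
    (fun y hy => div_nonneg (hm.trans hy.1.le) (sqrt_nonneg _))

theorem strictMonoOn_sqrt_sq_sub_sq (hm : 0 ≤ m) :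
    StrictMonoOn (fun y => √(y ^ 2 - m ^ 2)) (Ioi m) := by
  intro a (ha : m < a) b (_ : m < b) hab
  exact sqrt_lt_sqrt (sub_nonneg.2 (pow_lt_pow_left₀ ha hm two_ne_zero).le)
    (sub_lt_sub_right (pow_lt_pow_left₀ hab (hm.trans ha.le) two_ne_zero) _)

theorem image_sqrt_sq_sub_sq_Ioi (hm : 0 ≤ m) :
    (fun y => √(y ^ 2 - m ^ 2)) '' Ioi m = Ioi 0 := by
  ext x
  constructor
  · rintro ⟨y, hy, rfl⟩
    exact sqrt_pos.2 (sub_pos.2 (pow_lt_pow_left₀ hy hm two_ne_zero))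
  · intro (hx : 0 < x)
    refine ⟨√(x ^ 2 + m ^ 2), ?_, ?_⟩
    · rw [mem_Ioi, lt_sqrt hm]
      nlinarith
    · simp only [sq_sqrt (by positivity : 0 ≤ x ^ 2 + m ^ 2), add_sub_cancel_right,
        sqrt_sq hx.le]

theorem setIntegral_Ioi_comp_sqrt_sq_add_sq {E : Type*} [NormedAddCommGroup E]
    [NormedSpace ℝ E] (hm : 0 ≤ m) (F : ℝ → E) :
    ∫ x in Ioi 0, F √(x ^ 2 + m ^ 2) = ∫ y in Ioi m, (y / √(y ^ 2 - m ^ 2)) • F y := by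
  rw [← image_sqrt_sq_sub_sq_Ioi hm, integral_image_eq_integral_abs_deriv_smul measurableSet_Ioi
    (fun y hy => (hasDerivAt_sqrt_sq_sub_sq (pow_lt_pow_left₀ hy hm two_ne_zero)).hasDerivWithinAt)
    (strictMonoOn_sqrt_sq_sub_sq hm).injOn]
  refine setIntegral_congr_fun measurableSet_Ioi fun y (hy : m < y) => ?_
  have hy0 : 0 ≤ y := hm.trans hy.le
  rw [abs_of_nonneg (div_nonneg hy0 (sqrt_nonneg _)),
    sq_sqrt (sub_nonneg.2 (pow_lt_pow_left₀ hy hm two_ne_zero).le), sub_add_cancel, sqrt_sq hy0]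

end

theorem stmt6_general (m k : ℝ) (hk : 0 < k) :
    Tendsto
      (fun δ : ℝ => ∫ x in Set.Ioi (0 : ℝ),
        2 * δ / (δ ^ 2 + (Real.sqrt (x ^ 2 + m ^ 2) - Real.sqrt (k ^ 2 + m ^ 2)) ^ 2))
      (nhdsWithin 0 (Set.Ioi 0))
      (nhds (2 * π * Real.sqrt (k ^ 2 + m ^ 2) / k)) := by
  rw [← sq_abs m]
  set c := √(k ^ 2 + |m| ^ 2)
  have hmc : |m| < c := by
    rw [lt_sqrt (abs_nonneg m)]
    nlinarith
  have hk_eq : √(c ^ 2 - |m| ^ 2) = k := by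
    rw [sq_sqrt (by positivity), add_sub_cancel_right, sqrt_sq hk.le]
  obtain ⟨p, hmp, hpc⟩ := exists_between hmc
  refine Tendsto.congr (fun δ => (setIntegral_Ioi_comp_sqrt_sq_add_sq (abs_nonneg m)
    (fun y => 2 * δ / (δ ^ 2 + (y - c) ^ 2))).symm) ?_
  simp only [smul_eq_mul]
  convert tendsto_setIntegral_Ioi_mul_poisson hmp.le hpc (by fun_prop)
    (integrableOn_div_sqrt_sq_sub_sq (abs_nonneg m) p)
    (fun y hy => norm_div_sqrt_sq_sub_sq_le (abs_nonneg m) hmp (le_of_lt hy))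
    (continuousAt_id.div (by fun_prop) (hk_eq ▸ hk.ne')) using 2
  rw [hk_eq]
  ring

/-- with `λ(x) = √(x²+m²)` and `k > 0`,
`lim_{δ→0⁺} ∫₀^∞ 2δ/(δ² + (λ(x)-λ(k))²) dx = 2π√(k²+m²)/k`. -/
theorem stmt6 (m k : ℝ) (hm : 0 < m) (hk : 0 < k) :
    Tendsto
      (fun δ : ℝ => ∫ x in Set.Ioi (0 : ℝ),
        2 * δ / (δ ^ 2 + (Real.sqrt (x ^ 2 + m ^ 2) - Real.sqrt (k ^ 2 + m ^ 2)) ^ 2))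
      (nhdsWithin 0 (Set.Ioi 0))
      (nhds (2 * π * Real.sqrt (k ^ 2 + m ^ 2) / k)) :=
  stmt6_general m k hk
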